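/- Let Y ∈ ℝ^{n×p} be a 2-critical point of (BM) whose columns are linearly dependent (i.e., rank Y < p). Then Y Yᵀ is an optimal solution of (SDP), i.e., tr(C Y Yᵀ) ≤ tr(CX) for all X ∈ 𝒳. -/

import Mathlib

open Matrix MeasureTheory

noncomputable section

/-- The `k`-th triangular number `τ(k) = k(k+1)/2`. -/
def tau (k : ℕ) : ℕ := k * (k + 1) / 2

/-- The space `Sⁿ` of symmetric `n × n` real matrices, as a submodule of all matrices. -/
def SymMat (n : ℕ) : Submodule ℝ (Matrix (Fin n) (Fin n) ℝ) where
  carrier := {A | A.IsSymm}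
  add_mem' := fun ha hb => ha.add hb
  zero_mem' := by simp [Matrix.IsSymm]
  smul_mem' := fun c A hA => hA.smul c

instance (n : ℕ) : MeasurableSpace (Matrix (Fin n) (Fin n) ℝ) := borel _
instance (n : ℕ) : BorelSpace (Matrix (Fin n) (Fin n) ℝ) := ⟨rfl⟩
instance (n : ℕ) : MeasurableSpace (SymMat n) := borel _
instance (n : ℕ) : BorelSpace (SymMat n) := ⟨rfl⟩

/-- The feasible set `𝒳` of the SDP: `X` PSD, `tr(AᵢX) = bᵢ` for `i < m₁` (equalities),
`tr(AᵢX) ≥ bᵢ` for the remaining indices (inequalities). -/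
def Feas (n m m₁ : ℕ) (A : Fin m → Matrix (Fin n) (Fin n) ℝ) (b : Fin m → ℝ) :
    Set (Matrix (Fin n) (Fin n) ℝ) :=
  {X | X.PosSemidef ∧ ∀ i : Fin m,
      if (i : ℕ) < m₁ then (A i * X).trace = b i else b i ≤ (A i * X).trace}

/-- The slack matrix `S(λ) = C - Σᵢ λᵢ Aᵢ`. -/
def Slack {n m : ℕ} (C : Matrix (Fin n) (Fin n) ℝ) (A : Fin m → Matrix (Fin n) (Fin n) ℝ)
    (lam : Fin m → ℝ) : Matrix (Fin n) (Fin n) ℝ :=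
  C - ∑ i, lam i • A i

/-- `Y` is 1st-order critical for (BM) with multiplier `λ`. -/
def IsCrit1 (n p m m₁ : ℕ) (C : Matrix (Fin n) (Fin n) ℝ)
    (A : Fin m → Matrix (Fin n) (Fin n) ℝ) (b : Fin m → ℝ)
    (Y : Matrix (Fin n) (Fin p) ℝ) (lam : Fin m → ℝ) : Prop :=
  Y * Yᵀ ∈ Feas n m m₁ A b ∧
  (∀ i : Fin m, m₁ ≤ (i : ℕ) → 0 ≤ lam i) ∧
  (∀ i : Fin m, (A i * (Y * Yᵀ)).trace ≠ b i → lam i = 0) ∧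
  Slack C A lam * Y = 0

/-- `Y` is 2nd-order critical for (BM) with multiplier `λ`. -/
def IsCrit2 (n p m m₁ : ℕ) (C : Matrix (Fin n) (Fin n) ℝ)
    (A : Fin m → Matrix (Fin n) (Fin n) ℝ) (b : Fin m → ℝ)
    (Y : Matrix (Fin n) (Fin p) ℝ) (lam : Fin m → ℝ) : Prop :=
  IsCrit1 n p m m₁ C A b Y lam ∧
  ∀ U : Matrix (Fin n) (Fin p) ℝ,
    (∀ i : Fin m, (A i * (Y * Yᵀ)).trace = b i → (A i * (U * Yᵀ)).trace = 0) →
    0 ≤ (Slack C A lam * (U * Uᵀ)).trace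

/-- `X` is an optimal solution of (SDP). -/
def IsOptimal (n m m₁ : ℕ) (C : Matrix (Fin n) (Fin n) ℝ)
    (A : Fin m → Matrix (Fin n) (Fin n) ℝ) (b : Fin m → ℝ)
    (X : Matrix (Fin n) (Fin n) ℝ) : Prop :=
  X ∈ Feas n m m₁ A b ∧ ∀ X' ∈ Feas n m m₁ A b, (C * X).trace ≤ (C * X').trace

/-!
If `Y z = 0` for some `z ≠ 0`, then every `U = v zᵀ` satisfies `U Yᵀ = 0`, so it is an admissible
direction for the second-order condition, which yields `‖z‖² vᵀ S(λ) v ≥ 0`. Hence the quadratic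
form of the slack matrix `S(λ)` is nonnegative, and `λ` is a dual certificate: for feasible `X`,
`tr(CX) = tr(S(λ) X) + Σ λᵢ tr(AᵢX) ≥ Σ λᵢ bᵢ = tr(C Y Yᵀ)`, the last equality by complementary
slackness.
-/

open scoped ComplexOrder

theorem Matrix.exists_mulVec_eq_zero_of_rank_lt {K m n : Type*} [Field K] [Fintype n]
    (M : Matrix m n K) (h : M.rank < Fintype.card n) : ∃ v ≠ 0, M *ᵥ v = 0 := by
  by_contra! hinj
  have hker : LinearMap.ker M.mulVecLin = ⊥ :=
    ker_mulVecLin_eq_bot_iff.mpr fun v hv => not_imp_not.mp (hinj v) hv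
  rw [Matrix.rank, LinearMap.finrank_range_of_inj (LinearMap.ker_eq_bot.mp hker),
    Module.finrank_fintype_fun_eq_card] at h
  exact lt_irrefl _ h

theorem Matrix.trace_mul_nonneg_of_posSemidef {𝕜 n : Type*} [RCLike 𝕜] [Fintype n]
    {S X : Matrix n n 𝕜} (hS : ∀ v, 0 ≤ star v ⬝ᵥ S *ᵥ v) (hX : X.PosSemidef) :
    0 ≤ (S * X).trace := by
  obtain ⟨k, v, rfl⟩ := posSemidef_iff_eq_sum_vecMulVec.mp hX
  rw [Finset.mul_sum, trace_sum]
  refine Finset.sum_nonneg fun i _ => ?_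
  rw [mul_vecMulVec, trace_vecMulVec, dotProduct_comm]
  exact hS (v i)

section BurerMonteiro

variable {n p m m₁ : ℕ} {C : Matrix (Fin n) (Fin n) ℝ} {A : Fin m → Matrix (Fin n) (Fin n) ℝ}
  {b : Fin m → ℝ} {Y : Matrix (Fin n) (Fin p) ℝ} {lam : Fin m → ℝ}

theorem trace_mul_eq_trace_slack_mul_add (C : Matrix (Fin n) (Fin n) ℝ)
    (A : Fin m → Matrix (Fin n) (Fin n) ℝ) (lam : Fin m → ℝ) (M : Matrix (Fin n) (Fin n) ℝ) :
    (C * M).trace = (Slack C A lam * M).trace + ∑ i, lam i * (A i * M).trace := by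
  simp only [Slack, Matrix.sub_mul, trace_sub, Finset.sum_mul, trace_sum, Matrix.smul_mul,
    trace_smul, smul_eq_mul, sub_add_cancel]

theorem sum_mul_le_sum_mul_trace_of_mem_feas (hlam : ∀ i : Fin m, m₁ ≤ (i : ℕ) → 0 ≤ lam i)
    {X : Matrix (Fin n) (Fin n) ℝ} (hX : X ∈ Feas n m m₁ A b) :
    ∑ i, lam i * b i ≤ ∑ i, lam i * (A i * X).trace := by
  refine Finset.sum_le_sum fun i _ => ?_
  have hXi := hX.2 i
  split_ifs at hXi with hi
  · rw [hXi]
  · exact mul_le_mul_of_nonneg_left hXi (hlam i (not_lt.mp hi))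

theorem IsCrit1.trace_mul_mul_transpose_eq_sum (h : IsCrit1 n p m m₁ C A b Y lam) :
    (C * (Y * Yᵀ)).trace = ∑ i, lam i * b i := by
  obtain ⟨-, -, hcomp, hSY⟩ := h
  rw [trace_mul_eq_trace_slack_mul_add C A lam, ← Matrix.mul_assoc, hSY, Matrix.zero_mul,
    trace_zero, zero_add]
  refine Finset.sum_congr rfl fun i _ => ?_
  by_cases hi : (A i * (Y * Yᵀ)).trace = b i
  · rw [hi]
  · rw [hcomp i hi, zero_mul, zero_mul]

theorem IsCrit1.trace_mul_le_of_mem_feas (h : IsCrit1 n p m m₁ C A b Y lam)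
    (hS : ∀ v, 0 ≤ v ⬝ᵥ Slack C A lam *ᵥ v) {X : Matrix (Fin n) (Fin n) ℝ}
    (hX : X ∈ Feas n m m₁ A b) : (C * (Y * Yᵀ)).trace ≤ (C * X).trace := by
  have hSX : 0 ≤ (Slack C A lam * X).trace :=
    trace_mul_nonneg_of_posSemidef (fun v => by simpa using hS v) hX.1
  rw [h.trace_mul_mul_transpose_eq_sum, trace_mul_eq_trace_slack_mul_add C A lam X]
  linarith [sum_mul_le_sum_mul_trace_of_mem_feas h.2.1 hX]

theorem IsCrit2.dotProduct_slack_mulVec_nonneg (h : IsCrit2 n p m m₁ C A b Y lam)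
    {z : Fin p → ℝ} (hz : z ≠ 0) (hYz : Y *ᵥ z = 0) (v : Fin n → ℝ) :
    0 ≤ v ⬝ᵥ Slack C A lam *ᵥ v := by
  have hUY : vecMulVec v z * Yᵀ = 0 := by
    rw [vecMulVec_mul, vecMul_transpose, hYz, vecMulVec_zero]
  have hU := h.2 (vecMulVec v z) fun i _ => by rw [hUY, Matrix.mul_zero, trace_zero]
  rw [transpose_vecMulVec, vecMulVec_mul_vecMulVec, mul_vecMulVec, trace_vecMulVec,
    dotProduct_smul, smul_eq_mul, dotProduct_comm (Slack C A lam *ᵥ v)] at hU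
  have hzz : 0 < z ⬝ᵥ z := by simpa using dotProduct_star_self_pos_iff.mpr hz
  exact nonneg_of_mul_nonneg_right hU hzz

end BurerMonteiro

theorem crit2_rank_deficient_implies_optimal_general
    (n p m m₁ : ℕ)
    (A : Fin m → Matrix (Fin n) (Fin n) ℝ)
    (b : Fin m → ℝ)
    (C : Matrix (Fin n) (Fin n) ℝ)
    (Y : Matrix (Fin n) (Fin p) ℝ)
    (hcrit : ∃ lam : Fin m → ℝ, IsCrit2 n p m m₁ C A b Y lam)
    (hrank : Y.rank < p) :
    ∀ X ∈ Feas n m m₁ A b, (C * (Y * Yᵀ)).trace ≤ (C * X).trace := by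
  intro X hX
  obtain ⟨lam, hcrit⟩ := hcrit
  obtain ⟨z, hz, hYz⟩ := Y.exists_mulVec_eq_zero_of_rank_lt (by simpa using hrank)
  exact hcrit.1.trace_mul_le_of_mem_feas (hcrit.dotProduct_slack_mulVec_nonneg hz hYz) hX

/-- If `Y` is a 2-critical point of (BM) whose columns are linearly
dependent (i.e., `rank Y < p`), then `Y Yᵀ` is an optimal solution of (SDP). -/
theorem crit2_rank_deficient_implies_optimal
    (n p m m₁ : ℕ)
    (A : Fin m → Matrix (Fin n) (Fin n) ℝ) (hA : ∀ i, (A i).IsSymm)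
    (b : Fin m → ℝ)
    (C : Matrix (Fin n) (Fin n) ℝ) (hC : C.IsSymm)
    (Y : Matrix (Fin n) (Fin p) ℝ)
    (hcrit : ∃ lam : Fin m → ℝ, IsCrit2 n p m m₁ C A b Y lam)
    (hrank : Y.rank < p) :
    ∀ X ∈ Feas n m m₁ A b, (C * (Y * Yᵀ)).trace ≤ (C * X).trace :=
  crit2_rank_deficient_implies_optimal_general n p m m₁ A b C Y hcrit hrank
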